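/- arXiv:1611.06979 — 2 statements merged into one kernel-verified Lean document; each statement's English description precedes it below -/
import Mathlib

section
/- The number of 321-avoiding permutations in S_n with exactly one block (i.e. ⊕-irreducible 321-avoiding permutations) is the Catalan number C_{n−1}. -/
open Finset

/-- A permutation avoids the pattern 321 if it has no decreasing subsequence of length 3. -/
def Avoids321 {n : ℕ} (π : Equiv.Perm (Fin n)) : Prop :=
  ∀ i j k : Fin n, i < j → j < k → ¬ (π k < π j ∧ π j < π i)

/-- The set of positions of left-to-right maxima of a permutation. -/
def LtrSet {n : ℕ} (π : Equiv.Perm (Fin n)) : Finset (Fin n) :=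
  Finset.univ.filter (fun i => ∀ j, j ≤ i → π j ≤ π i)

/-- The block number of a permutation (0-based version of
`|{1 ≤ i ≤ n : π(j) ≤ i for all j ≤ i}|`). -/
def blockNum {n : ℕ} (π : Equiv.Perm (Fin n)) : ℕ :=
  (Finset.univ.filter (fun i : Fin n => ∀ j, j ≤ i → π j ≤ i)).card

/-- The descent set of a permutation, as a set of 1-based positions in `[n-1]`. -/
def DesSet {n : ℕ} (π : Equiv.Perm (Fin n)) : Finset ℕ :=
  Finset.image (fun i : Fin n => (i : ℕ) + 1)
    (Finset.univ.filter (fun i : Fin n => ∃ h : (i : ℕ) + 1 < n, π ⟨(i : ℕ) + 1, h⟩ < π i))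

/-- The last descent of a permutation (`0` if there is no descent). -/
def ldes {n : ℕ} (π : Equiv.Perm (Fin n)) : ℕ := (DesSet π).sup id



open Finset

/-- Superdiagonal monotone maps on `Fin m`. -/
def SDset (m : ℕ) : Finset (Fin m → Fin m) :=
  Finset.univ.filter (fun f => (∀ i j : Fin m, i ≤ j → (f i : ℕ) ≤ f j) ∧ ∀ i : Fin m, (i : ℕ) ≤ f i)

lemma mem_SDset {m : ℕ} {f : Fin m → Fin m} :
    f ∈ SDset m ↔ (∀ i j : Fin m, i ≤ j → (f i : ℕ) ≤ f j) ∧ ∀ i : Fin m, (i : ℕ) ≤ f i := by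
  simp [SDset]

lemma SDset_zero_card : (SDset 0).card = 1 := by decide

/-- Forward map: split a superdiagonal map at its least fixed point `k`. -/
def sdFwd (m k : ℕ) (hk : k < m + 1) (f : Fin (m+1) → Fin (m+1)) :
    (Fin k → Fin k) × (Fin (m-k) → Fin (m-k)) :=
  (fun i => ⟨min ((f ⟨i, by omega⟩ : ℕ) - 1) (k-1), by have := i.isLt; omega⟩,
   fun j => ⟨min ((f ⟨k+1+j, by have := j.isLt; omega⟩ : ℕ) - (k+1)) (m-k-1),
      by have := j.isLt; omega⟩)

/-- Backward map: glue two superdiagonal maps. -/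
def sdBwd (m k : ℕ) (hk : k < m + 1)
    (p : (Fin k → Fin k) × (Fin (m-k) → Fin (m-k))) : Fin (m+1) → Fin (m+1) :=
  fun i =>
    if hik : (i : ℕ) < k then ⟨(p.1 ⟨i, hik⟩ : ℕ) + 1, by have := (p.1 ⟨i, hik⟩).isLt; omega⟩
    else if hie : (i : ℕ) = k then ⟨k, hk⟩
    else ⟨(p.2 ⟨(i : ℕ) - k - 1, by have := i.isLt; omega⟩ : ℕ) + k + 1,
      by have := (p.2 ⟨(i : ℕ) - k - 1, by have := i.isLt; omega⟩).isLt; omega⟩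

lemma sdFwd_fst_val (m k : ℕ) (hk : k < m + 1) (f) (i : Fin k) (h : (i : ℕ) < m + 1) :
    ((sdFwd m k hk f).1 i : ℕ) = min ((f ⟨i, h⟩ : ℕ) - 1) (k-1) := rfl

lemma sdFwd_snd_val (m k : ℕ) (hk : k < m + 1) (f) (j : Fin (m-k)) (h : k+1+(j : ℕ) < m + 1) :
    ((sdFwd m k hk f).2 j : ℕ) = min ((f ⟨k+1+j, h⟩ : ℕ) - (k+1)) (m-k-1) := rfl

lemma sdBwd_val_lt (m k : ℕ) (hk : k < m + 1) (p) (i : Fin (m+1)) (hik : (i : ℕ) < k) :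
    (sdBwd m k hk p i : ℕ) = (p.1 ⟨i, hik⟩ : ℕ) + 1 := by
  rw [sdBwd, dif_pos hik]

lemma sdBwd_val_eq (m k : ℕ) (hk : k < m + 1) (p) (i : Fin (m+1)) (hie : (i : ℕ) = k) :
    (sdBwd m k hk p i : ℕ) = k := by
  rw [sdBwd, dif_neg (by omega), dif_pos hie]

lemma sdBwd_val_gt (m k : ℕ) (hk : k < m + 1) (p) (i : Fin (m+1)) (hik : k < (i : ℕ)) :
    (sdBwd m k hk p i : ℕ)
      = (p.2 ⟨(i : ℕ) - k - 1, by have := i.isLt; omega⟩ : ℕ) + k + 1 := by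
  rw [sdBwd, dif_neg (by omega), dif_neg (by omega)]

lemma SDset_card_succ (m : ℕ) :
    (SDset (m+1)).card = ∑ k ∈ Finset.range (m+1), (SDset k).card * (SDset (m-k)).card := by
  classical
  set lfp : (Fin (m+1) → Fin (m+1)) → ℕ :=
    fun f => sInf {j : ℕ | ∃ hj : j < m+1, (f ⟨j, hj⟩ : ℕ) = j} with hlfp
  have hmem : ∀ f ∈ SDset (m+1), m ∈ {j : ℕ | ∃ hj : j < m+1, (f ⟨j, hj⟩ : ℕ) = j} := by
    intro f hf
    obtain ⟨-, hsd⟩ := mem_SDset.mp hf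
    refine ⟨by omega, ?_⟩
    have h1 : (m : ℕ) ≤ (f ⟨m, by omega⟩ : ℕ) := hsd ⟨m, by omega⟩
    have h2 := (f ⟨m, by omega⟩).isLt
    omega
  have hmaps : ∀ f ∈ SDset (m+1), lfp f ∈ Finset.range (m+1) := by
    intro f hf
    have := Nat.sInf_le (hmem f hf)
    simp only [Finset.mem_range, hlfp]; omega
  rw [Finset.card_eq_sum_card_fiberwise hmaps]
  refine Finset.sum_congr rfl fun k hk => ?_
  rw [Finset.mem_range] at hk
  rw [← Finset.card_product]
  have key : ∀ f ∈ {f ∈ SDset (m+1) | lfp f = k},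
      (∀ i j : Fin (m+1), i ≤ j → (f i : ℕ) ≤ f j) ∧ (∀ i : Fin (m+1), (i : ℕ) ≤ f i)
      ∧ ((f ⟨k, hk⟩ : ℕ) = k)
      ∧ (∀ j : Fin (m+1), (j : ℕ) < k → (j : ℕ) < f j) := by
    intro f hf
    rw [Finset.mem_filter] at hf
    obtain ⟨hf1, hfk⟩ := hf
    obtain ⟨hmono, hsd⟩ := mem_SDset.mp hf1
    replace hfk : sInf {j : ℕ | ∃ hj : j < m+1, (f ⟨j, hj⟩ : ℕ) = j} = k := hfk
    have hne : {j : ℕ | ∃ hj : j < m+1, (f ⟨j, hj⟩ : ℕ) = j}.Nonempty := ⟨m, hmem f hf1⟩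
    have hksp := Nat.sInf_mem hne
    rw [hfk] at hksp
    obtain ⟨hk1, hk2⟩ := hksp
    refine ⟨hmono, hsd, hk2, fun j hjk => ?_⟩
    have hnm : (j : ℕ) ∉ {j : ℕ | ∃ hj : j < m+1, (f ⟨j, hj⟩ : ℕ) = j} := by
      intro hmem2
      have := Nat.sInf_le hmem2
      omega
    simp only [Set.mem_setOf_eq, not_exists] at hnm
    have h2 : ¬ (f ⟨(j:ℕ), j.isLt⟩ : ℕ) = (j : ℕ) := hnm j.isLt
    have h3 : (j : ℕ) ≤ (f j : ℕ) := hsd j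
    have h4 : f ⟨(j : ℕ), j.isLt⟩ = f j := rfl
    rw [h4] at h2
    omega
  refine Finset.card_nbij' (sdFwd m k hk) (sdBwd m k hk) ?_ ?_ ?_ ?_
  · -- fwd maps into product
    intro f hf
    obtain ⟨hmono, hsd, hfk, hlt⟩ := key f hf
    rw [Finset.mem_coe, Finset.mem_product, mem_SDset, mem_SDset]
    refine ⟨⟨fun i j hij => ?_, fun i => ?_⟩, fun i j hij => ?_, fun i => ?_⟩
    · rw [sdFwd_fst_val m k hk f i (by have := i.isLt; omega),
        sdFwd_fst_val m k hk f j (by have := j.isLt; omega)]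
      have h1 : (f ⟨(i:ℕ), by have := i.isLt; omega⟩ : ℕ)
          ≤ (f ⟨(j:ℕ), by have := j.isLt; omega⟩ : ℕ) := hmono _ _ hij
      omega
    · rw [sdFwd_fst_val m k hk f i (by have := i.isLt; omega)]
      have h1 : (i : ℕ) < (f ⟨(i:ℕ), by have := i.isLt; omega⟩ : ℕ) :=
        hlt ⟨(i:ℕ), by have := i.isLt; omega⟩ i.isLt
      have h2 : (f ⟨(i:ℕ), by have := i.isLt; omega⟩ : ℕ) ≤ (f ⟨k, hk⟩ : ℕ) :=
        hmono _ _ (by have := i.isLt; exact Nat.le_of_lt this)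
      have := i.isLt
      omega
    · rw [sdFwd_snd_val m k hk f i (by have := i.isLt; omega),
        sdFwd_snd_val m k hk f j (by have := j.isLt; omega)]
      have h1 : (f ⟨k+1+(i:ℕ), by have := i.isLt; omega⟩ : ℕ)
          ≤ (f ⟨k+1+(j:ℕ), by have := j.isLt; omega⟩ : ℕ) := by
        refine hmono _ _ ?_
        have : (i : ℕ) ≤ (j : ℕ) := hij
        show k+1+(i:ℕ) ≤ k+1+(j:ℕ)
        omega
      omega
    · rw [sdFwd_snd_val m k hk f i (by have := i.isLt; omega)]
      have h1 : (k+1+(i:ℕ) : ℕ) ≤ (f ⟨k+1+(i:ℕ), by have := i.isLt; omega⟩ : ℕ) :=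
        hsd ⟨k+1+(i:ℕ), by have := i.isLt; omega⟩
      have h2 := (f ⟨k+1+(i:ℕ), by have := i.isLt; omega⟩).isLt
      have := i.isLt
      omega
  · -- bwd maps into fiber
    intro p hp
    rw [Finset.mem_coe, Finset.mem_product, mem_SDset, mem_SDset] at hp
    obtain ⟨⟨h1mono, h1sd⟩, h2mono, h2sd⟩ := hp
    rw [Finset.mem_coe, Finset.mem_filter]
    constructor
    · rw [mem_SDset]
      constructor
      · intro i j hij
        have hij' : (i : ℕ) ≤ (j : ℕ) := hij
        rcases lt_trichotomy (i:ℕ) k with hik | hik | hik <;>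
          rcases lt_trichotomy (j:ℕ) k with hjk | hjk | hjk
        · rw [sdBwd_val_lt m k hk p i hik, sdBwd_val_lt m k hk p j hjk]
          have h1 : (p.1 ⟨(i:ℕ), hik⟩ : ℕ) ≤ (p.1 ⟨(j:ℕ), hjk⟩ : ℕ) :=
            h1mono ⟨(i:ℕ), hik⟩ ⟨(j:ℕ), hjk⟩ hij'
          omega
        · rw [sdBwd_val_lt m k hk p i hik, sdBwd_val_eq m k hk p j hjk]
          have := (p.1 ⟨(i:ℕ), hik⟩).isLt
          omega
        · rw [sdBwd_val_lt m k hk p i hik, sdBwd_val_gt m k hk p j hjk]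
          have := (p.1 ⟨(i:ℕ), hik⟩).isLt
          omega
        · omega
        · rw [sdBwd_val_eq m k hk p i hik, sdBwd_val_eq m k hk p j hjk]
        · rw [sdBwd_val_eq m k hk p i hik, sdBwd_val_gt m k hk p j hjk]
          omega
        · omega
        · omega
        · rw [sdBwd_val_gt m k hk p i hik, sdBwd_val_gt m k hk p j hjk]
          have h1 : (p.2 ⟨(i:ℕ)-k-1, by have := i.isLt; omega⟩ : ℕ)
              ≤ (p.2 ⟨(j:ℕ)-k-1, by have := j.isLt; omega⟩ : ℕ) := by
            refine h2mono _ _ ?_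
            show (i:ℕ)-k-1 ≤ (j:ℕ)-k-1
            omega
          omega
      · intro i
        rcases lt_trichotomy (i:ℕ) k with hik | hik | hik
        · rw [sdBwd_val_lt m k hk p i hik]
          have : (i:ℕ) ≤ (p.1 ⟨i, hik⟩ : ℕ) := h1sd ⟨i, hik⟩
          omega
        · rw [sdBwd_val_eq m k hk p i hik]; omega
        · rw [sdBwd_val_gt m k hk p i hik]
          have : ((i:ℕ)-k-1 : ℕ) ≤ (p.2 ⟨(i:ℕ)-k-1, by have := i.isLt; omega⟩ : ℕ) :=
            h2sd ⟨(i:ℕ)-k-1, by have := i.isLt; omega⟩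
          have := i.isLt
          omega
    · -- lfp = k
      show sInf {j : ℕ | ∃ hj : j < m+1, (sdBwd m k hk p ⟨j, hj⟩ : ℕ) = j} = k
      have hin : k ∈ {j : ℕ | ∃ hj : j < m+1, (sdBwd m k hk p ⟨j, hj⟩ : ℕ) = j} :=
        ⟨hk, sdBwd_val_eq m k hk p ⟨k, hk⟩ rfl⟩
      have hlb : ∀ j ∈ {j : ℕ | ∃ hj : j < m+1, (sdBwd m k hk p ⟨j, hj⟩ : ℕ) = j}, k ≤ j := by
        rintro j ⟨hj, hfix⟩
        by_contra hjk
        push_neg at hjk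
        rw [sdBwd_val_lt m k hk p ⟨j, hj⟩ hjk] at hfix
        have h5 : (j : ℕ) ≤ (p.1 ⟨((⟨j, hj⟩ : Fin (m+1)) : ℕ), hjk⟩ : ℕ) :=
          h1sd ⟨((⟨j, hj⟩ : Fin (m+1)) : ℕ), hjk⟩
        omega
      have h1 := Nat.sInf_le hin
      have h2 := hlb _ (Nat.sInf_mem ⟨k, hin⟩)
      omega
  · -- left inverse
    intro f hf
    obtain ⟨hmono, hsd, hfk, hlt⟩ := key f hf
    funext i
    apply Fin.ext
    rcases lt_trichotomy (i:ℕ) k with hik | hik | hik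
    · rw [sdBwd_val_lt m k hk _ i hik]
      have h4 : ((sdFwd m k hk f).1 ⟨(i:ℕ), hik⟩ : ℕ) = min ((f i : ℕ) - 1) (k-1) := rfl
      rw [h4]
      have h1 : (i : ℕ) < (f i : ℕ) := hlt i hik
      have h2 : (f i : ℕ) ≤ (f ⟨k, hk⟩ : ℕ) := hmono i ⟨k, hk⟩ (Nat.le_of_lt hik)
      omega
    · rw [sdBwd_val_eq m k hk _ i hik]
      have h3 : f ⟨k, hk⟩ = f i := by congr 1; exact Fin.ext hik.symm
      rw [← h3, hfk]
    · rw [sdBwd_val_gt m k hk _ i hik]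
      have h4 : ((sdFwd m k hk f).2 ⟨(i:ℕ)-k-1, by have := i.isLt; omega⟩ : ℕ)
          = min ((f ⟨k+1+((i:ℕ)-k-1), by have := i.isLt; omega⟩ : ℕ) - (k+1)) (m-k-1) := rfl
      rw [h4]
      have heq : (⟨k+1+((i:ℕ)-k-1), by have := i.isLt; omega⟩ : Fin (m+1)) = i :=
        Fin.ext (by show k+1+((i:ℕ)-k-1) = (i:ℕ); omega)
      rw [heq]
      have h1 : (i:ℕ) ≤ (f i : ℕ) := hsd i
      have h2 := (f i).isLt
      omega
  · -- right inverse
    intro p hp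
    rw [Finset.mem_coe, Finset.mem_product, mem_SDset, mem_SDset] at hp
    obtain ⟨⟨h1mono, h1sd⟩, h2mono, h2sd⟩ := hp
    have e1 : (sdFwd m k hk (sdBwd m k hk p)).1 = p.1 := by
      funext i
      apply Fin.ext
      rw [sdFwd_fst_val m k hk _ i (by have := i.isLt; omega)]
      rw [sdBwd_val_lt m k hk p ⟨(i:ℕ), by have := i.isLt; omega⟩ i.isLt]
      have h2 : p.1 ⟨((⟨(i:ℕ), by have := i.isLt; omega⟩ : Fin (m+1)) : ℕ), i.isLt⟩ = p.1 i := rfl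
      rw [h2]
      have := (p.1 i).isLt
      omega
    have e2 : (sdFwd m k hk (sdBwd m k hk p)).2 = p.2 := by
      funext j
      apply Fin.ext
      rw [sdFwd_snd_val m k hk _ j (by have := j.isLt; omega)]
      rw [sdBwd_val_gt m k hk p ⟨k+1+(j:ℕ), by have := j.isLt; omega⟩ (by show k < k+1+(j:ℕ); omega)]
      have hidx : (⟨((⟨k+1+(j:ℕ), by have := j.isLt; omega⟩ : Fin (m+1)) : ℕ)-k-1,
          by have := j.isLt; omega⟩ : Fin (m-k)) = j := by
        apply Fin.ext
        show k+1+(j:ℕ)-k-1 = (j:ℕ)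
        omega
      rw [hidx]
      have := (p.2 j).isLt
      omega
    exact Prod.ext e1 e2

lemma SDset_card (m : ℕ) : (SDset m).card = catalan m := by
  induction m using Nat.strong_induction_on with
  | _ m ih =>
    match m with
    | 0 => simpa using SDset_zero_card
    | (m+1) =>
      rw [SDset_card_succ, catalan_succ, ← Fin.sum_univ_eq_sum_range]
      refine Finset.sum_congr rfl fun k _ => ?_
      rw [ih k (by omega), ih (m - k) (by omega)]

section rank
variable {α : Type*} [LinearOrder α]

lemma rank_lt_card {s : Finset α} {x : α} (hx : x ∈ s) :
    (s.filter (· < x)).card < s.card := by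
  refine Finset.card_lt_card ⟨Finset.filter_subset _ s, fun hsub => ?_⟩
  have := hsub hx
  simp at this

lemma filter_lt_orderEmbOfFin_card {s : Finset α} {k : ℕ} (h : s.card = k) (j : Fin k) :
    (s.filter (· < s.orderEmbOfFin h j)).card = j := by
  classical
  have himg : s.filter (· < s.orderEmbOfFin h j)
      = (Finset.univ.filter (fun t : Fin k => t < j)).image (s.orderEmbOfFin h) := by
    ext y
    simp only [Finset.mem_filter, Finset.mem_image, Finset.mem_univ, true_and]
    constructor
    · rintro ⟨hy, hlt⟩
      have hy' : y ∈ Set.range (s.orderEmbOfFin h) := by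
        rw [Finset.range_orderEmbOfFin]; exact hy
      obtain ⟨t, rfl⟩ := hy'
      exact ⟨t, (OrderEmbedding.lt_iff_lt _).mp hlt, rfl⟩
    · rintro ⟨t, htj, rfl⟩
      exact ⟨Finset.orderEmbOfFin_mem s h t, (OrderEmbedding.lt_iff_lt _).mpr htj⟩
  rw [himg, Finset.card_image_of_injective _ (s.orderEmbOfFin h).injective]
  have huniv : (Finset.univ.filter (fun t : Fin k => t < j)) = Finset.Iio j := by
    ext t; simp
  rw [huniv, Fin.card_Iio]

lemma orderEmbOfFin_rank {s : Finset α} {k : ℕ} (h : s.card = k) {x : α} (hx : x ∈ s)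
    (hr : (s.filter (· < x)).card < k) :
    s.orderEmbOfFin h ⟨(s.filter (· < x)).card, hr⟩ = x := by
  set y := s.orderEmbOfFin h ⟨(s.filter (· < x)).card, hr⟩ with hy
  have hys : y ∈ s := Finset.orderEmbOfFin_mem s h _
  have hrk : (s.filter (· < y)).card = (s.filter (· < x)).card := by
    rw [hy]; exact filter_lt_orderEmbOfFin_card h _
  rcases lt_trichotomy y x with hlt | he | hgt
  · exfalso
    have hcc : (s.filter (· < y)).card < (s.filter (· < x)).card := by
      refine Finset.card_lt_card ⟨Finset.monotone_filter_right s (fun z _ hz => lt_trans hz hlt),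
        fun hc => ?_⟩
      have := Finset.mem_filter.mp (hc (Finset.mem_filter.mpr ⟨hys, hlt⟩))
      exact lt_irrefl y this.2
    omega
  · exact he
  · exfalso
    have hcc : (s.filter (· < x)).card < (s.filter (· < y)).card := by
      refine Finset.card_lt_card ⟨Finset.monotone_filter_right s (fun z _ hz => lt_trans hz hgt),
        fun hc => ?_⟩
      have := Finset.mem_filter.mp (hc (Finset.mem_filter.mpr ⟨hx, hgt⟩))
      exact lt_irrefl x this.2
    omega

lemma orderEmbOfFin_lt_of_rank_lt {s : Finset α} {k : ℕ} (h : s.card = k) (j : Fin k) {b : α}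
    (hb : (j : ℕ) < (s.filter (· < b)).card) : s.orderEmbOfFin h j < b := by
  by_contra hge
  push_neg at hge
  have hsub : s.filter (· < b) ⊆ s.filter (· < s.orderEmbOfFin h j) :=
    Finset.monotone_filter_right s (fun z _ hz => lt_of_lt_of_le hz hge)
  have hle := Finset.card_le_card hsub
  rw [filter_lt_orderEmbOfFin_card h j] at hle
  omega

end rank

section decode
variable {n : ℕ}

/-- Prefix maximum of a function on `Fin n`, as a natural number. -/
def pmaxF (f : Fin n → Fin n) (i : Fin n) : ℕ := (Finset.Iic i).sup (fun j => (f j : ℕ))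

lemma le_pmaxF (f : Fin n → Fin n) {j i : Fin n} (h : j ≤ i) : (f j : ℕ) ≤ pmaxF f i :=
  Finset.le_sup (f := fun j => (f j : ℕ)) (Finset.mem_Iic.mpr h)

lemma pmaxF_mono (f : Fin n → Fin n) {i i' : Fin n} (h : i ≤ i') : pmaxF f i ≤ pmaxF f i' :=
  Finset.sup_mono (Finset.Iic_subset_Iic.mpr h)

lemma pmaxF_lt (f : Fin n → Fin n) (i : Fin n) : pmaxF f i < n := by
  rw [pmaxF, Finset.sup_lt_iff (by simpa using i.pos : (⊥ : ℕ) < n)]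
  exact fun j _ => (f j).isLt

lemma pmaxF_exists (f : Fin n → Fin n) (i : Fin n) : ∃ j, j ≤ i ∧ (f j : ℕ) = pmaxF f i := by
  obtain ⟨j, hj, he⟩ := Finset.exists_mem_eq_sup (Finset.Iic i) ⟨i, Finset.mem_Iic.mpr le_rfl⟩
    (fun j => (f j : ℕ))
  exact ⟨j, Finset.mem_Iic.mp hj, he.symm⟩

lemma pmaxF_le_iff (f : Fin n → Fin n) (i : Fin n) (b : ℕ) :
    pmaxF f i ≤ b ↔ ∀ j, j ≤ i → (f j : ℕ) ≤ b := by
  rw [pmaxF, Finset.sup_le_iff]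
  constructor
  · intro h j hj; exact h j (Finset.mem_Iic.mpr hj)
  · intro h j hj; exact h j (Finset.mem_Iic.mp hj)

lemma self_le_pmaxF (f : Fin n → Fin n) (hf : Function.Injective f) (i : Fin n) :
    (i : ℕ) ≤ pmaxF f i := by
  have hsub : (Finset.Iic i).image (fun j => (f j : ℕ)) ⊆ Finset.Iic (pmaxF f i) := by
    intro x hx
    rw [Finset.mem_image] at hx
    obtain ⟨j, hj, rfl⟩ := hx
    exact Finset.mem_Iic.mpr (le_pmaxF f (Finset.mem_Iic.mp hj))
  have hcard : ((Finset.Iic i).image (fun j => (f j : ℕ))).card = (i : ℕ) + 1 := by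
    rw [Finset.card_image_of_injective _ (fun a b hab => hf (Fin.ext hab)), Fin.card_Iic]
  have := Finset.card_le_card hsub
  rw [hcard, Nat.card_Iic] at this
  omega

/-- Positions where a (prospective prefix-max) function achieves a new maximum. -/
def newMaxSet (M : Fin n → Fin n) : Finset (Fin n) :=
  Finset.univ.filter (fun i => ∀ j, j < i → M j < M i)

lemma mem_newMaxSet {M : Fin n → Fin n} {i : Fin n} :
    i ∈ newMaxSet M ↔ ∀ j, j < i → M j < M i := by simp [newMaxSet]

lemma newMax_strict {M : Fin n → Fin n} {p1 p2 : Fin n}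
    (h2 : p2 ∈ newMaxSet M) (hlt : p1 < p2) : M p1 < M p2 :=
  (mem_newMaxSet.mp h2) p1 hlt

lemma card_newMax_image (M : Fin n → Fin n) :
    ((newMaxSet M).image M).card = (newMaxSet M).card := by
  apply Finset.card_image_of_injOn
  intro p1 h1 p2 h2 he
  by_contra hne
  rcases lt_or_gt_of_ne hne with h | h
  · exact absurd he (ne_of_lt (newMax_strict h2 h))
  · exact absurd he.symm (ne_of_lt (newMax_strict h1 h))

lemma card_WQ (M : Fin n → Fin n) :
    (((newMaxSet M).image M)ᶜ).card = ((newMaxSet M)ᶜ).card := by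
  rw [Finset.card_compl, Finset.card_compl, card_newMax_image]

/-- Decoded function: new-max positions get the prescribed value, other positions are filled
with the remaining values in increasing order. -/
def decFun (M : Fin n → Fin n) : Fin n → Fin n :=
  fun i =>
    if h : i ∈ newMaxSet M then M i
    else (((newMaxSet M).image M)ᶜ).orderEmbOfFin (card_WQ M)
      ⟨((((newMaxSet M)ᶜ).filter (· < i)).card),
        rank_lt_card (Finset.mem_compl.mpr h)⟩

lemma decFun_mem_apply {M : Fin n → Fin n} {i : Fin n} (h : i ∈ newMaxSet M) :
    decFun M i = M i := dif_pos h

lemma decFun_not_mem_apply {M : Fin n → Fin n} {i : Fin n} (h : i ∉ newMaxSet M) :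
    decFun M i = (((newMaxSet M).image M)ᶜ).orderEmbOfFin (card_WQ M)
      ⟨((((newMaxSet M)ᶜ).filter (· < i)).card),
        rank_lt_card (Finset.mem_compl.mpr h)⟩ := dif_neg h

lemma decFun_not_mem_memW {M : Fin n → Fin n} {i : Fin n} (h : i ∉ newMaxSet M) :
    decFun M i ∈ ((newMaxSet M).image M)ᶜ := by
  rw [decFun_not_mem_apply h]
  exact Finset.orderEmbOfFin_mem _ _ _

lemma decFun_strict_on_Q {M : Fin n → Fin n} {i j : Fin n}
    (hi : i ∉ newMaxSet M) (hj : j ∉ newMaxSet M) (hij : i < j) :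
    decFun M i < decFun M j := by
  rw [decFun_not_mem_apply hi, decFun_not_mem_apply hj]
  apply (Finset.orderEmbOfFin _ _).strictMono
  show ((((newMaxSet M)ᶜ).filter (· < i)).card) < ((((newMaxSet M)ᶜ).filter (· < j)).card)
  refine Finset.card_lt_card ⟨Finset.monotone_filter_right _ (fun z _ hz => lt_trans hz hij),
    fun hc => ?_⟩
  have hmem : i ∈ ((newMaxSet M)ᶜ).filter (· < j) :=
    Finset.mem_filter.mpr ⟨Finset.mem_compl.mpr hi, hij⟩
  have := (Finset.mem_filter.mp (hc hmem)).2
  exact lt_irrefl i this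

lemma decFun_injective (M : Fin n → Fin n) : Function.Injective (decFun M) := by
  intro i j he
  by_contra hne
  wlog hij : i < j generalizing i j
  · exact this he.symm (Ne.symm hne) (by omega)
  by_cases hi : i ∈ newMaxSet M <;> by_cases hj : j ∈ newMaxSet M
  · rw [decFun_mem_apply hi, decFun_mem_apply hj] at he
    exact absurd he (ne_of_lt (newMax_strict hj hij))
  · have h1 : decFun M i ∈ (newMaxSet M).image M := by
      rw [decFun_mem_apply hi]; exact Finset.mem_image_of_mem M hi
    have h2 := decFun_not_mem_memW hj
    rw [he] at h1
    exact (Finset.mem_compl.mp h2) h1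
  · have h1 : decFun M j ∈ (newMaxSet M).image M := by
      rw [decFun_mem_apply hj]; exact Finset.mem_image_of_mem M hj
    have h2 := decFun_not_mem_memW hi
    rw [← he] at h1
    exact (Finset.mem_compl.mp h2) h1
  · exact absurd he (ne_of_lt (decFun_strict_on_Q hi hj hij))

/-- The decoded permutation. -/
noncomputable def decPerm (M : Fin n → Fin n) : Equiv.Perm (Fin n) :=
  Equiv.ofBijective (decFun M) (Finite.injective_iff_bijective.mp (decFun_injective M))

lemma decPerm_apply (M : Fin n → Fin n) (i : Fin n) : decPerm M i = decFun M i := rfl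

end decode

section decodeProps
variable {n : ℕ} {M : Fin n → Fin n}
  (hmono : ∀ i j : Fin n, i ≤ j → M i ≤ M j)

include hmono in
/-- Start of the plateau of `M` at `i` is a new-max position with the same value. -/
lemma plateau_exists (i : Fin n) :
    ∃ p, p ∈ newMaxSet M ∧ p ≤ i ∧ M p = M i := by
  classical
  set S : Finset (Fin n) := Finset.univ.filter (fun j => M i ≤ M j) with hS
  have hiS : i ∈ S := by simp [hS]
  have hne : S.Nonempty := ⟨i, hiS⟩
  refine ⟨S.min' hne, ?_, S.min'_le i hiS, ?_⟩
  · rw [mem_newMaxSet]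
    intro j hj
    have hjS : j ∉ S := fun hjS => absurd (S.min'_le j hjS) (not_le.mpr hj)
    simp only [hS, Finset.mem_filter, Finset.mem_univ, true_and, not_le] at hjS
    have : M i ≤ M (S.min' hne) := by
      have := S.min'_mem hne
      simp only [hS, Finset.mem_filter] at this
      exact this.2
    exact lt_of_lt_of_le hjS this
  · have h1 : M i ≤ M (S.min' hne) := by
      have := S.min'_mem hne
      simp only [hS, Finset.mem_filter] at this
      exact this.2
    exact le_antisymm (hmono _ _ (S.min'_le i hiS)) h1

lemma card_filter_lt_fin (b : Fin n) :
    (Finset.univ.filter (fun x : Fin n => x < b)).card = (b : ℕ) := by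
  have : (Finset.univ.filter (fun x : Fin n => x < b)) = Finset.Iio b := by ext t; simp
  rw [this, Fin.card_Iio]

lemma card_filter_compl_add {V : Finset (Fin n)} {p : Fin n → Prop} [DecidablePred p] :
    ((Vᶜ).filter p).card + (V.filter p).card = (Finset.univ.filter p).card := by
  classical
  rw [← Finset.card_union_of_disjoint]
  · congr 1
    ext x
    simp only [Finset.mem_union, Finset.mem_filter, Finset.mem_compl, Finset.mem_univ, true_and]
    tauto
  · refine Finset.disjoint_filter_filter ?_
    simp [Finset.disjoint_left]

include hmono in
/-- The count of new-max positions up to `i` in terms of values below `M i`. -/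
lemma newMax_count (i : Fin n) :
    ((newMaxSet M).filter (fun p => M p < M i)).card + 1
      = ((newMaxSet M).filter (· ≤ i)).card := by
  classical
  obtain ⟨p₀, hp₀P, hp₀le, hp₀v⟩ := plateau_exists hmono i
  have hset : (newMaxSet M).filter (· ≤ i)
      = insert p₀ ((newMaxSet M).filter (fun p => M p < M i)) := by
    ext p
    simp only [Finset.mem_filter, Finset.mem_insert]
    constructor
    · rintro ⟨hP, hle⟩
      by_cases hpp : p = p₀
      · exact Or.inl hpp
      · refine Or.inr ⟨hP, ?_⟩
        have h1 : M p ≤ M i := hmono _ _ hle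
        rcases lt_or_eq_of_le h1 with h | h
        · exact h
        · exfalso
          rw [← hp₀v] at h
          rcases lt_trichotomy p p₀ with hc | hc | hc
          · exact absurd h (ne_of_lt (newMax_strict hp₀P hc))
          · exact hpp hc
          · exact absurd h.symm (ne_of_lt (newMax_strict hP hc))
    · rintro (rfl | ⟨hP, hv⟩)
      · exact ⟨hp₀P, hp₀le⟩
      · refine ⟨hP, ?_⟩
        by_contra hgt
        push_neg at hgt
        have := newMax_strict hP (lt_of_le_of_lt hp₀le hgt)
        rw [hp₀v] at this
        omega
  have hnotin : p₀ ∉ (newMaxSet M).filter (fun p => M p < M i) := by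
    simp only [Finset.mem_filter, hp₀v, not_and]
    intro _
    exact lt_irrefl _
  rw [hset, Finset.card_insert_of_notMem hnotin]

include hmono in
lemma decFun_lt_of_not_newMax (hsd : ∀ i : Fin n, (i : ℕ) ≤ M i) {i : Fin n}
    (h : i ∉ newMaxSet M) : decFun M i < M i := by
  classical
  rw [decFun_not_mem_apply h]
  apply orderEmbOfFin_lt_of_rank_lt
  show (((newMaxSet M)ᶜ).filter (· < i)).card
    < ((((newMaxSet M).image M)ᶜ).filter (· < M i)).card
  -- abbreviations
  set P := newMaxSet M with hPdef
  set V := P.image M with hVdef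
  have hVfilter : (V.filter (· < M i)) = (P.filter (fun p => M p < M i)).image M := by
    ext v
    simp only [Finset.mem_filter, Finset.mem_image, V]
    constructor
    · rintro ⟨⟨p, hp, rfl⟩, hv⟩
      exact ⟨p, ⟨hp, hv⟩, rfl⟩
    · rintro ⟨p, ⟨hp, hv⟩, rfl⟩
      exact ⟨⟨p, hp, rfl⟩, hv⟩
  have hVcard : (V.filter (· < M i)).card = (P.filter (fun p => M p < M i)).card := by
    rw [hVfilter]
    apply Finset.card_image_of_injOn
    intro p1 h1 p2 h2 he
    have h1' := (Finset.mem_filter.mp h1).1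
    have h2' := (Finset.mem_filter.mp h2).1
    by_contra hne
    rcases lt_or_gt_of_ne hne with hc | hc
    · exact absurd he (ne_of_lt (newMax_strict h2' hc))
    · exact absurd he.symm (ne_of_lt (newMax_strict h1' hc))
  have hcount := newMax_count hmono i
  rw [← hPdef] at hcount
  -- counts
  have hsplitW : ((Vᶜ).filter (· < M i)).card + (V.filter (· < M i)).card = (M i : ℕ) := by
    rw [card_filter_compl_add, card_filter_lt_fin]
  have hsplitQ : ((Pᶜ).filter (· < i)).card + (P.filter (· < i)).card = (i : ℕ) := by
    rw [card_filter_compl_add, card_filter_lt_fin]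
  have hPle : (P.filter (· ≤ i)).card = (P.filter (· < i)).card := by
    congr 1
    ext p
    simp only [Finset.mem_filter]
    constructor
    · rintro ⟨hp, hle⟩
      refine ⟨hp, lt_of_le_of_ne hle ?_⟩
      rintro rfl
      exact h hp
    · rintro ⟨hp, hlt⟩
      exact ⟨hp, le_of_lt hlt⟩
  have hsdi : (i : ℕ) ≤ (M i : ℕ) := hsd i
  omega

include hmono in
lemma pmaxF_decFun (hsd : ∀ i : Fin n, (i : ℕ) ≤ M i) (i : Fin n) :
    pmaxF (decFun M) i = (M i : ℕ) := by
  apply le_antisymm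
  · rw [pmaxF_le_iff]
    intro j hj
    have hMj : (M j : ℕ) ≤ (M i : ℕ) := hmono j i hj
    by_cases hP : j ∈ newMaxSet M
    · rw [decFun_mem_apply hP]; exact hMj
    · have := decFun_lt_of_not_newMax hmono hsd hP
      omega
  · obtain ⟨p₀, hp₀P, hp₀le, hp₀v⟩ := plateau_exists hmono i
    have h1 : (decFun M p₀ : ℕ) ≤ pmaxF (decFun M) i := le_pmaxF _ hp₀le
    rw [decFun_mem_apply hp₀P, hp₀v] at h1
    exact h1

end decodeProps


section decodeFull
variable {n : ℕ} {M : Fin n → Fin n}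

lemma decFun_le (hmono : ∀ i j : Fin n, i ≤ j → M i ≤ M j)
    (hsd : ∀ i : Fin n, (i : ℕ) ≤ M i) (i : Fin n) : decFun M i ≤ M i := by
  by_cases h : i ∈ newMaxSet M
  · rw [decFun_mem_apply h]
  · exact le_of_lt (decFun_lt_of_not_newMax hmono hsd h)

lemma avoids321_decPerm (hmono : ∀ i j : Fin n, i ≤ j → M i ≤ M j)
    (hsd : ∀ i : Fin n, (i : ℕ) ≤ M i) : Avoids321 (decPerm M) := by
  have hC : ∀ a b : Fin n, a < b → decPerm M b < decPerm M a → b ∉ newMaxSet M := by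
    intro a b hab hba hP
    rw [decPerm_apply, decPerm_apply, decFun_mem_apply hP] at hba
    have h1 : decFun M a ≤ M a := decFun_le hmono hsd a
    have h2 : M a ≤ M b := hmono a b (le_of_lt hab)
    exact absurd (lt_of_le_of_lt (le_trans h1 h2) hba) (lt_irrefl _)
  rintro i j k hij hjk ⟨h1, h2⟩
  have hj : j ∉ newMaxSet M := hC i j hij h2
  have hk : k ∉ newMaxSet M := hC j k hjk h1
  have := decFun_strict_on_Q hj hk hjk
  rw [decPerm_apply, decPerm_apply] at h1
  exact absurd h1 (not_lt.mpr (le_of_lt this))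

lemma blockNum_eq_card_pmax (π : Equiv.Perm (Fin n)) :
    blockNum π = (Finset.univ.filter (fun i : Fin n => pmaxF (⇑π) i ≤ (i : ℕ))).card := by
  unfold blockNum
  congr 1
  ext i
  simp only [Finset.mem_filter, Finset.mem_univ, true_and]
  rw [pmaxF_le_iff]
  constructor
  · intro h j hj; exact h j hj
  · intro h j hj; exact h j hj

lemma blockNum_decPerm_eq_one (hn : 0 < n)
    (hmono : ∀ i j : Fin n, i ≤ j → M i ≤ M j)
    (hsd : ∀ i : Fin n, (i : ℕ) ≤ M i)
    (hirr : ∀ i : Fin n, (i : ℕ) + 1 < n → (i : ℕ) < M i) :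
    blockNum (decPerm M) = 1 := by
  rw [blockNum_eq_card_pmax]
  have hpm : ∀ i : Fin n, pmaxF (⇑(decPerm M)) i = (M i : ℕ) := by
    intro i
    have : ⇑(decPerm M) = decFun M := rfl
    rw [this]
    exact pmaxF_decFun hmono hsd i
  have hset : (Finset.univ.filter (fun i : Fin n => pmaxF (⇑(decPerm M)) i ≤ (i : ℕ)))
      = {⟨n-1, by omega⟩} := by
    ext i
    simp only [Finset.mem_filter, Finset.mem_univ, true_and, Finset.mem_singleton]
    rw [hpm i]
    constructor
    · intro h
      apply Fin.ext
      show (i : ℕ) = n - 1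
      by_contra hne
      have hi1 : (i : ℕ) + 1 < n := by have := i.isLt; omega
      have := hirr i hi1
      omega
    · rintro rfl
      show (M ⟨n-1, _⟩ : ℕ) ≤ n - 1
      have := (M ⟨n-1, by omega⟩).isLt
      omega
  rw [hset, Finset.card_singleton]

end decodeFull

section encodeSide
variable {n : ℕ} (π : Equiv.Perm (Fin n))

lemma pmaxF_newMax_eq {i : Fin n}
    (h : ∀ j, j < i → pmaxF (⇑π) j < pmaxF (⇑π) i) : (π i : ℕ) = pmaxF (⇑π) i := by
  obtain ⟨j₀, hle, hv⟩ := pmaxF_exists (⇑π) i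
  rcases lt_or_eq_of_le hle with hlt | rfl
  · exfalso
    have h1 := h j₀ hlt
    have h2 : (π j₀ : ℕ) ≤ pmaxF (⇑π) j₀ := le_pmaxF _ le_rfl
    omega
  · exact hv

lemma pmaxF_not_newMax_lt {i : Fin n}
    (h : ¬ ∀ j, j < i → pmaxF (⇑π) j < pmaxF (⇑π) i) : (π i : ℕ) < pmaxF (⇑π) i := by
  push_neg at h
  obtain ⟨j, hj, hge⟩ := h
  have heq : pmaxF (⇑π) j = pmaxF (⇑π) i :=
    le_antisymm (pmaxF_mono _ (le_of_lt hj)) hge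
  have hle : (π i : ℕ) ≤ pmaxF (⇑π) i := le_pmaxF _ le_rfl
  rcases lt_or_eq_of_le hle with hlt | heq2
  · exact hlt
  · exfalso
    obtain ⟨j₀, hj₀le, hj₀v⟩ := pmaxF_exists (⇑π) j
    have : π j₀ = π i := Fin.ext (by rw [hj₀v, heq, ← heq2])
    have hji : j₀ = i := π.injective this
    rw [hji] at hj₀le
    exact absurd (lt_of_le_of_lt hj₀le hj) (lt_irrefl i)

lemma perm_strict_on_Q (hA : Avoids321 π) {i i' : Fin n} (hii' : i < i')
    (hi : ¬ ∀ j, j < i → pmaxF (⇑π) j < pmaxF (⇑π) i) :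
    π i < π i' := by
  by_contra hle
  push_neg at hle
  have hne : π i' ≠ π i := fun he => absurd (π.injective he) (ne_of_lt hii').symm
  have hlt : π i' < π i := lt_of_le_of_ne hle hne
  have h2 : (π i : ℕ) < pmaxF (⇑π) i := pmaxF_not_newMax_lt π hi
  obtain ⟨j₀, hj₀le, hj₀v⟩ := pmaxF_exists (⇑π) i
  have hj₀i : j₀ ≠ i := by
    intro h; rw [h] at hj₀v; omega
  have hj₀lt : j₀ < i := lt_of_le_of_ne hj₀le hj₀i
  exact hA j₀ i i' hj₀lt hii' ⟨hlt, by rw [Fin.lt_def]; omega⟩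

end encodeSide

section mainBij
variable {n : ℕ}

/-- Encoding: shifted prefix maxima. -/
def encFun (n : ℕ) (π : Equiv.Perm (Fin n)) : Fin (n-1) → Fin (n-1) :=
  fun i => ⟨min (pmaxF (⇑π) ⟨i, by have := i.isLt; omega⟩ - 1) (n-2), by have := i.isLt; omega⟩

/-- Lift of an `SDset`-element to a prospective prefix-max function on `Fin n`. -/
def decM (n : ℕ) (hn : 1 ≤ n) (m : Fin (n-1) → Fin (n-1)) : Fin n → Fin n :=
  fun i => if h : (i : ℕ) < n-1 then ⟨(m ⟨i, h⟩ : ℕ) + 1, by have := (m ⟨i, h⟩).isLt; omega⟩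
           else ⟨n-1, by omega⟩

lemma decM_val_lt (hn : 1 ≤ n) (m : Fin (n-1) → Fin (n-1)) (i : Fin n) (h : (i : ℕ) < n-1) :
    (decM n hn m i : ℕ) = (m ⟨i, h⟩ : ℕ) + 1 := by
  rw [decM, dif_pos h]

lemma decM_val_last (hn : 1 ≤ n) (m : Fin (n-1) → Fin (n-1)) (i : Fin n) (h : ¬ (i : ℕ) < n-1) :
    (decM n hn m i : ℕ) = n-1 := by
  rw [decM, dif_neg h]

lemma decM_mono (hn : 1 ≤ n) {m : Fin (n-1) → Fin (n-1)} (hm : m ∈ SDset (n-1)) :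
    ∀ i j : Fin n, i ≤ j → decM n hn m i ≤ decM n hn m j := by
  obtain ⟨hmono, hsd⟩ := mem_SDset.mp hm
  intro i j hij
  rw [Fin.le_def] at hij ⊢
  by_cases hi : (i : ℕ) < n-1 <;> by_cases hj : (j : ℕ) < n-1
  · rw [decM_val_lt hn m i hi, decM_val_lt hn m j hj]
    have := hmono ⟨i, hi⟩ ⟨j, hj⟩ hij
    omega
  · rw [decM_val_lt hn m i hi, decM_val_last hn m j hj]
    have := (m ⟨i, hi⟩).isLt
    omega
  · omega
  · rw [decM_val_last hn m i hi, decM_val_last hn m j hj]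

lemma decM_sd (hn : 1 ≤ n) {m : Fin (n-1) → Fin (n-1)} (hm : m ∈ SDset (n-1)) :
    ∀ i : Fin n, (i : ℕ) ≤ decM n hn m i := by
  obtain ⟨hmono, hsd⟩ := mem_SDset.mp hm
  intro i
  by_cases hi : (i : ℕ) < n-1
  · rw [decM_val_lt hn m i hi]
    have h3 : (i : ℕ) ≤ (m ⟨i, hi⟩ : ℕ) := hsd ⟨i, hi⟩
    omega
  · rw [decM_val_last hn m i hi]
    have := i.isLt
    omega

lemma decM_irr (hn : 1 ≤ n) {m : Fin (n-1) → Fin (n-1)} (hm : m ∈ SDset (n-1)) :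
    ∀ i : Fin n, (i : ℕ) + 1 < n → (i : ℕ) < decM n hn m i := by
  obtain ⟨hmono, hsd⟩ := mem_SDset.mp hm
  intro i hi
  have hi' : (i : ℕ) < n-1 := by omega
  rw [decM_val_lt hn m i hi']
  have h3 : (i : ℕ) ≤ (m ⟨i, hi'⟩ : ℕ) := hsd ⟨i, hi'⟩
  omega

lemma pmax_gt_of_blockNum_one (π : Equiv.Perm (Fin n)) (hn : 1 ≤ n) (hb : blockNum π = 1) :
    ∀ i : Fin n, (i : ℕ) + 1 < n → (i : ℕ) < pmaxF (⇑π) i := by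
  rw [blockNum_eq_card_pmax] at hb
  obtain ⟨a, ha⟩ := Finset.card_eq_one.mp hb
  have hlast : (⟨n-1, by omega⟩ : Fin n)
      ∈ Finset.univ.filter (fun i : Fin n => pmaxF (⇑π) i ≤ (i : ℕ)) := by
    simp only [Finset.mem_filter, Finset.mem_univ, true_and]
    have := pmaxF_lt (⇑π) ⟨n-1, by omega⟩
    show pmaxF (⇑π) _ ≤ n-1
    omega
  intro i hi
  by_contra h
  push_neg at h
  have hmem : i ∈ Finset.univ.filter (fun i : Fin n => pmaxF (⇑π) i ≤ (i : ℕ)) := by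
    simp only [Finset.mem_filter, Finset.mem_univ, true_and]
    exact h
  rw [ha, Finset.mem_singleton] at hmem hlast
  have heq : i = (⟨n-1, by omega⟩ : Fin n) := hmem.trans hlast.symm
  have h2 : (i : ℕ) = n - 1 := by rw [heq]
  omega

end mainBij

lemma encFun_val (n : ℕ) (π : Equiv.Perm (Fin n)) (i : Fin (n-1)) (h : (i : ℕ) < n) :
    (encFun n π i : ℕ) = min (pmaxF (⇑π) ⟨i, h⟩ - 1) (n-2) := rfl

/-- The number of ⊕-irreducible 321-avoiding permutations in `S_n` is the Catalan
number `C_{n-1} = binom(2(n-1), n-1)/n`. -/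
theorem card_avoids321_one_block (n : ℕ) (hn : 1 ≤ n) :
    (Nat.card {π : Equiv.Perm (Fin n) // Avoids321 π ∧ blockNum π = 1} : ℚ) =
      (Nat.choose (2 * (n - 1)) (n - 1) : ℚ) / ((n - 1 : ℕ) + 1 : ℚ) := by
  classical
  have hcard : Nat.card {π : Equiv.Perm (Fin n) // Avoids321 π ∧ blockNum π = 1}
      = catalan (n-1) := by
    rw [Nat.card_eq_fintype_card, Fintype.card_subtype, ← SDset_card (n-1)]
    refine Finset.card_nbij' (encFun n) (fun m => decPerm (decM n hn m)) ?_ ?_ ?_ ?_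
    · -- encFun maps into SDset
      intro π hπ
      rw [Finset.mem_coe, Finset.mem_filter] at hπ
      obtain ⟨-, hA, hb⟩ := hπ
      have hgt := pmax_gt_of_blockNum_one π hn hb
      rw [Finset.mem_coe, mem_SDset]
      constructor
      · intro i j hij
        have hi' : (i : ℕ) < n := by have := i.isLt; omega
        have hj' : (j : ℕ) < n := by have := j.isLt; omega
        rw [encFun_val n π i hi', encFun_val n π j hj']
        have hpm : pmaxF (⇑π) ⟨i, hi'⟩ ≤ pmaxF (⇑π) ⟨j, hj'⟩ := pmaxF_mono (⇑π) hij
        omega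
      · intro i
        have hi' : (i : ℕ) < n := by have := i.isLt; omega
        rw [encFun_val n π i hi']
        have h1 : (i : ℕ) < pmaxF (⇑π) ⟨i, hi'⟩ := hgt ⟨i, hi'⟩ (show (i:ℕ)+1 < n by have := i.isLt; omega)
        have h2 := pmaxF_lt (⇑π) ⟨i, hi'⟩
        have := i.isLt
        omega
    · -- decPerm ∘ decM maps into the permutation set
      intro m hm
      rw [Finset.mem_coe, Finset.mem_filter]
      exact ⟨Finset.mem_univ _,
        avoids321_decPerm (decM_mono hn hm) (decM_sd hn hm),
        blockNum_decPerm_eq_one (by omega) (decM_mono hn hm) (decM_sd hn hm) (decM_irr hn hm)⟩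
    · -- left inverse : dec (enc π) = π
      intro π hπ
      rw [Finset.mem_coe, Finset.mem_filter] at hπ
      obtain ⟨-, hA, hb⟩ := hπ
      have hgt := pmax_gt_of_blockNum_one π hn hb
      set M'' := decM n hn (encFun n π) with hM
      have hMeq : ∀ i : Fin n, (M'' i : ℕ) = pmaxF (⇑π) i := by
        intro i
        by_cases hi : (i : ℕ) < n-1
        · rw [hM, decM_val_lt hn _ i hi]
          have h2 : (encFun n π ⟨i, hi⟩ : ℕ) = min (pmaxF (⇑π) i - 1) (n-2) := rfl
          rw [h2]
          have h3 : (i : ℕ) < pmaxF (⇑π) i := hgt i (by omega)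
          have h4 := pmaxF_lt (⇑π) i
          omega
        · rw [hM, decM_val_last hn _ i hi]
          have h3 : (i : ℕ) ≤ pmaxF (⇑π) i := self_le_pmaxF (⇑π) π.injective i
          have h4 := pmaxF_lt (⇑π) i
          have := i.isLt
          omega
      have hPiff : ∀ i : Fin n,
          i ∈ newMaxSet M'' ↔ (∀ j, j < i → pmaxF (⇑π) j < pmaxF (⇑π) i) := by
        intro i
        rw [mem_newMaxSet]
        constructor
        · intro h j hj
          have h5 : (M'' j : ℕ) < (M'' i : ℕ) := h j hj
          rw [hMeq, hMeq] at h5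
          exact h5
        · intro h j hj
          have h5 := h j hj
          show M'' j < M'' i
          rw [Fin.lt_def, hMeq, hMeq]
          exact h5
      apply Equiv.ext
      intro i
      rw [decPerm_apply]
      by_cases hP : i ∈ newMaxSet M''
      · rw [decFun_mem_apply hP]
        apply Fin.ext
        rw [hMeq i]
        exact (pmaxF_newMax_eq π ((hPiff i).mp hP)).symm
      · rw [decFun_not_mem_apply hP]
        have hFs : ∀ t : Fin ((newMaxSet M'')ᶜ.card),
            π ((newMaxSet M'')ᶜ.orderEmbOfFin rfl t) ∈ ((newMaxSet M'').image M'')ᶜ := by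
          intro t
          have hqt : (newMaxSet M'')ᶜ.orderEmbOfFin rfl t ∈ (newMaxSet M'')ᶜ :=
            Finset.orderEmbOfFin_mem _ _ _
          rw [Finset.mem_compl]
          intro hmemV
          rw [Finset.mem_image] at hmemV
          obtain ⟨p, hpP, hpv⟩ := hmemV
          have hpv2 : (π p : ℕ) = pmaxF (⇑π) p := pmaxF_newMax_eq π ((hPiff p).mp hpP)
          have hpe : π p = M'' p := Fin.ext (by rw [hpv2, hMeq])
          rw [← hpe] at hpv
          have hip := π.injective hpv
          rw [hip] at hpP
          rw [Finset.mem_compl] at hqt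
          exact hqt hpP
        have hFmono : StrictMono
            (fun t : Fin ((newMaxSet M'')ᶜ.card) => π ((newMaxSet M'')ᶜ.orderEmbOfFin rfl t)) := by
          intro t t' htt'
          have h1 : (newMaxSet M'')ᶜ.orderEmbOfFin rfl t < (newMaxSet M'')ᶜ.orderEmbOfFin rfl t' :=
            ((newMaxSet M'')ᶜ.orderEmbOfFin rfl).strictMono htt'
          have h2 : (newMaxSet M'')ᶜ.orderEmbOfFin rfl t ∈ (newMaxSet M'')ᶜ :=
            Finset.orderEmbOfFin_mem _ _ _
          rw [Finset.mem_compl] at h2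
          exact perm_strict_on_Q π hA h1 (fun hc => h2 ((hPiff _).mpr hc))
        have huniq := Finset.orderEmbOfFin_unique (card_WQ M'') hFs hFmono
        have hrank : (newMaxSet M'')ᶜ.orderEmbOfFin rfl
            ⟨(((newMaxSet M'')ᶜ).filter (· < i)).card, rank_lt_card (Finset.mem_compl.mpr hP)⟩
              = i :=
          orderEmbOfFin_rank rfl (Finset.mem_compl.mpr hP) _
        calc (((newMaxSet M'').image M'')ᶜ).orderEmbOfFin (card_WQ M'')
              ⟨(((newMaxSet M'')ᶜ).filter (· < i)).card, rank_lt_card (Finset.mem_compl.mpr hP)⟩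
            = π ((newMaxSet M'')ᶜ.orderEmbOfFin rfl
              ⟨(((newMaxSet M'')ᶜ).filter (· < i)).card,
                rank_lt_card (Finset.mem_compl.mpr hP)⟩) := by rw [← huniq]
          _ = π i := by rw [hrank]
    · -- right inverse : enc (dec m) = m
      intro m hm
      funext i
      apply Fin.ext
      have hi' : (i : ℕ) < n := by have := i.isLt; omega
      have h2 : (encFun n (decPerm (decM n hn m)) i : ℕ)
          = min (pmaxF (⇑(decPerm (decM n hn m))) ⟨i, hi'⟩ - 1) (n-2) := rfl
      rw [h2]
      have hco : ⇑(decPerm (decM n hn m)) = decFun (decM n hn m) := rfl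
      rw [hco, pmaxF_decFun (decM_mono hn hm) (decM_sd hn hm) ⟨i, hi'⟩]
      have hii : ((⟨(i : ℕ), hi'⟩ : Fin n) : ℕ) < n-1 := i.isLt
      rw [decM_val_lt hn m ⟨(i : ℕ), hi'⟩ hii]
      have h3 : m ⟨((⟨(i : ℕ), hi'⟩ : Fin n) : ℕ), hii⟩ = m i := rfl
      rw [h3]
      have := (m i).isLt
      omega
  rw [hcard]
  have key := succ_mul_catalan_eq_centralBinom (n-1)
  have hcb : Nat.centralBinom (n-1) = (2*(n-1)).choose (n-1) := rfl
  rw [hcb] at key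
  have h2 : ((n - 1 : ℕ) + 1 : ℚ) ≠ 0 := by positivity
  rw [eq_div_iff h2]
  have : ((catalan (n-1) : ℚ)) * ((n-1 : ℕ) + 1 : ℚ) = (((n-1)+1) * catalan (n-1) : ℕ) := by
    push_cast
    ring
  rw [this, key]
end

section
/- A permutation π ∈ S_n is 321-avoiding if and only if its image P-tableau under the Robinson–Schensted correspondence has at most two rows. -/
/-- Schensted row insertion: insert `x` into an increasing row, returning the new
row and the bumped entry (if any). -/
def insertRow : List ℕ → ℕ → List ℕ × Option ℕ
  | [], x => ([x], none)
  | a :: as, x =>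
    if x < a then (x :: as, some a)
    else
      let r := insertRow as x
      (a :: r.1, r.2)

/-- Schensted insertion of an entry into a tableau (given as its list of rows). -/
def insertTableau : List (List ℕ) → ℕ → List (List ℕ)
  | [], x => [[x]]
  | r :: rs, x =>
    match insertRow r x with
    | (r', none) => r' :: rs
    | (r', some y) => r' :: insertTableau rs y

/-- The Robinson–Schensted insertion tableau `P_π` of a word, as a list of rows. -/
def RSP (w : List ℕ) : List (List ℕ) := w.foldl insertTableau []

open scoped List

/-!
A 321 pattern `a > b > c` forces a third row. Once `b` has been inserted after `a`, either there
are three rows already or the first row holds some `v ≥ b` below a larger second-row entry `u`,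
and later insertions preserve this. Inserting `c` then bumps some `y ≤ v` out of the first row,
and `y < u` bumps an entry out of the second.

Conversely, while the word read so far is 321-free, every second-row entry `u` and first-row entry
`y < u` admit a subword `[u, v]` with `y ≤ v < u`. If inserting `z` bumped `y₀ > z` out of the
first row and `y₀` in turn bumped some `u > y₀` out of the second, then `[u, v, z]` would be a
321 pattern.
-/

theorem List.eq_getD_zero_or_eq_getD_one {α : Type*} {l : List α} {x d : α} (hl : l.length ≤ 2)
    (hx : x ∈ l) : x = l.getD 0 d ∨ x = l.getD 1 d := by
  rcases l with _ | ⟨x₀, _ | ⟨x₁, _ | ⟨x₂, l⟩⟩⟩ <;> simp_all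

theorem List.sublist_append_singleton_iff {α : Type*} {l w : List α} {z : α} :
    l <+ w ++ [z] ↔ l <+ w ∨ ∃ l', l = l' ++ [z] ∧ l' <+ w := by
  rw [List.sublist_append_iff]
  constructor
  · rintro ⟨l₁, l₂, rfl, h₁, h₂⟩
    rcases List.sublist_singleton.mp h₂ with rfl | rfl
    exacts [Or.inl (by simpa using h₁), Or.inr ⟨l₁, rfl, h₁⟩]
  · rintro (h | ⟨l', rfl, h⟩)
    exacts [⟨l, [], by simp, h, by simp⟩, ⟨l', [z], rfl, h, .refl _⟩]

theorem List.cons_cons_cons_nil_sublist_ofFn_iff {α : Type*} {n : ℕ} {g : Fin n → α} {a b c : α} :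
    [a, b, c] <+ List.ofFn g ↔ ∃ i j k, i < j ∧ j < k ∧ g i = a ∧ g j = b ∧ g k = c := by
  rw [List.ofFn_eq_map, List.sublist_map_iff]
  constructor
  · rintro ⟨l, hl, hmap⟩
    obtain ⟨i, j, k, rfl, rfl, rfl, rfl⟩ : ∃ i j k, l = [i, j, k] ∧ g i = a ∧ g j = b ∧ g k = c := by
      rcases l with _ | ⟨i, _ | ⟨j, _ | ⟨k, _ | _⟩⟩⟩ <;> simp_all
    have := (List.pairwise_lt_finRange n).sublist hl
    simp only [List.pairwise_cons, List.mem_cons, List.not_mem_nil, forall_eq_or_imp] at this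
    exact ⟨i, j, k, this.1.1, this.2.1.1, rfl, rfl, rfl⟩
  · rintro ⟨i, j, k, hij, hjk, rfl, rfl, rfl⟩
    have hsorted : [i, j, k].Pairwise (· < ·) := by simp [hij, hjk, hij.trans hjk]
    refine ⟨[i, j, k], List.sublist_of_subperm_of_pairwise ?_ hsorted (List.pairwise_lt_finRange n),
      rfl⟩
    exact hsorted.nodup.subperm (by simp [List.subset_def])

section InsertRow

variable {r : List ℕ} {x y b : ℕ}

theorem mem_insertRow_fst_self (r : List ℕ) (x : ℕ) : x ∈ (insertRow r x).1 := by
  induction r with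
  | nil => simp [insertRow]
  | cons a as ih => by_cases h : x < a <;> simp [insertRow, h, ih]

theorem eq_or_mem_of_mem_insertRow_fst (h : b ∈ (insertRow r x).1) : b = x ∨ b ∈ r := by
  induction r with
  | nil => simpa [insertRow] using h
  | cons a as ih =>
    by_cases hx : x < a <;> simp only [insertRow, hx, ite_true, ite_false, List.mem_cons] at h
    · rcases h with h | h <;> simp [h]
    · rcases h with h | h
      · simp [h]
      · rcases ih h with h | h <;> simp [h]

theorem mem_insertRow_fst_or_snd_eq (h : b ∈ r) :
    b ∈ (insertRow r x).1 ∨ (insertRow r x).2 = some b := by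
  induction r with
  | nil => simp at h
  | cons a as ih =>
    by_cases hx : x < a <;> simp only [insertRow, hx, ite_true, ite_false, List.mem_cons]
    · rcases List.mem_cons.mp h with rfl | h <;> simp [h]
    · rcases List.mem_cons.mp h with rfl | h
      · simp
      · rcases ih h with h | h <;> simp [h]

theorem insertRow_snd_eq_none_iff : (insertRow r x).2 = none ↔ ∀ a ∈ r, a ≤ x := by
  induction r with
  | nil => simp [insertRow]
  | cons a as ih => by_cases hx : x < a <;> simp [insertRow, hx, ih]; omega

theorem lt_and_mem_of_insertRow_snd_eq_some (h : (insertRow r x).2 = some y) :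
    x < y ∧ y ∈ r := by
  induction r with
  | nil => simp [insertRow] at h
  | cons a as ih =>
    by_cases hx : x < a <;> simp only [insertRow, hx, ite_true, ite_false] at h
    · cases h; simp [hx]
    · simp [ih h]

theorem exists_insertRow_snd_eq_some {a : ℕ} (ha : a ∈ r) (hxa : x < a) :
    ∃ y, (insertRow r x).2 = some y := by
  rw [← Option.ne_none_iff_exists', Ne, insertRow_snd_eq_none_iff]
  exact fun h => (h a ha).not_gt hxa

theorem isLeast_of_insertRow_snd_eq_some (hr : r.Pairwise (· ≤ ·))
    (h : (insertRow r x).2 = some y) : IsLeast {a | a ∈ r ∧ x < a} y := by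
  induction r with
  | nil => simp [insertRow] at h
  | cons a as ih =>
    rw [List.pairwise_cons] at hr
    by_cases hx : x < a <;> simp only [insertRow, hx, ite_true, ite_false] at h
    · cases h
      exact ⟨⟨List.mem_cons_self, hx⟩, fun c ⟨hc, _⟩ => by
        rcases List.mem_cons.mp hc with rfl | hc
        exacts [le_rfl, hr.1 c hc]⟩
    · obtain ⟨⟨hy, hxy⟩, hleast⟩ := ih hr.2 h
      refine ⟨⟨List.mem_cons_of_mem a hy, hxy⟩, fun c ⟨hc, hxc⟩ => ?_⟩
      rcases List.mem_cons.mp hc with rfl | hc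
      exacts [absurd hxc hx, hleast ⟨hc, hxc⟩]

theorem pairwise_insertRow_fst (hr : r.Pairwise (· ≤ ·)) :
    (insertRow r x).1.Pairwise (· ≤ ·) := by
  induction r with
  | nil => simp [insertRow]
  | cons a as ih =>
    rw [List.pairwise_cons] at hr
    by_cases hx : x < a <;> simp only [insertRow, hx, ite_true, ite_false, List.pairwise_cons]
    · exact ⟨fun c hc => hx.le.trans (hr.1 c hc), hr.2⟩
    · refine ⟨fun c hc => ?_, ih hr.2⟩
      rcases eq_or_mem_of_mem_insertRow_fst hc with rfl | hc
      exacts [not_lt.mp hx, hr.1 c hc]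

theorem perm_insertRow (r : List ℕ) (x : ℕ) :
    (insertRow r x).1 ++ (insertRow r x).2.toList ~ x :: r := by
  induction r with
  | nil => simp [insertRow]
  | cons a as ih =>
    by_cases hx : x < a
    · simp [insertRow, hx]
    · simp only [insertRow, hx, ite_false, List.cons_append]
      exact ((ih.cons a).trans (List.Perm.swap x a as))

end InsertRow

section InsertTableau

variable {T : List (List ℕ)} {z y y' : ℕ}

theorem insertTableau_nil (z : ℕ) : insertTableau [] z = [[z]] := rfl

theorem insertTableau_cons (r : List ℕ) (rs : List (List ℕ)) (z : ℕ) :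
    insertTableau (r :: rs) z = (insertRow r z).1 :: (insertRow r z).2.elim rs (insertTableau rs) := by
  rcases h : insertRow r z with ⟨r', _ | y⟩ <;> simp [insertTableau, h]

theorem insertTableau_getD_zero (T : List (List ℕ)) (z : ℕ) :
    (insertTableau T z).getD 0 [] = (insertRow (T.getD 0 []) z).1 := by
  cases T <;> simp [insertTableau_nil, insertTableau_cons, insertRow]

theorem insertTableau_getD_one_of_none (h : (insertRow (T.getD 0 []) z).2 = none) :
    (insertTableau T z).getD 1 [] = T.getD 1 [] := by
  cases T with
  | nil => simp [insertTableau_nil]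
  | cons r rs => simp_all [insertTableau_cons]

theorem insertTableau_getD_one_of_some (h : (insertRow (T.getD 0 []) z).2 = some y) :
    (insertTableau T z).getD 1 [] = (insertRow (T.getD 1 []) y).1 := by
  cases T with
  | nil => simp [insertRow] at h
  | cons r rs =>
    rw [List.getD_cons_zero] at h
    rw [insertTableau_cons, h, Option.elim, List.getD_cons_succ, List.getD_cons_succ,
      insertTableau_getD_zero]

theorem length_le_length_insertTableau (T : List (List ℕ)) (z : ℕ) :
    T.length ≤ (insertTableau T z).length := by
  induction T generalizing z with
  | nil => simp
  | cons r rs ih =>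
    rcases h : (insertRow r z).2 with _ | y <;> simp [insertTableau_cons, h, ih]

theorem insertTableau_ne_nil (T : List (List ℕ)) (z : ℕ) : insertTableau T z ≠ [] := by
  cases T <;> simp [insertTableau_nil, insertTableau_cons]

theorem three_le_length_insertTableau (h₀ : (insertRow (T.getD 0 []) z).2 = some y)
    (h₁ : (insertRow (T.getD 1 []) y).2 = some y') : 3 ≤ (insertTableau T z).length := by
  rcases T with _ | ⟨r₀, _ | ⟨r₁, rs⟩⟩
  · simp [insertRow] at h₀
  · simp [insertRow] at h₁
  · have := List.length_pos_iff.mpr (insertTableau_ne_nil rs y')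
    simp_all [insertTableau_cons]
    omega

theorem length_insertTableau_le_two (hT : T.length ≤ 2)
    (h : ∀ y, (insertRow (T.getD 0 []) z).2 = some y → (insertRow (T.getD 1 []) y).2 = none) :
    (insertTableau T z).length ≤ 2 := by
  rcases T with _ | ⟨r₀, _ | ⟨r₁, _ | ⟨r₂, rs⟩⟩⟩
  · simp [insertTableau_nil]
  · rcases h₀ : (insertRow r₀ z).2 with _ | y <;> simp [insertTableau_cons, insertTableau_nil, h₀]
  · rcases h₀ : (insertRow r₀ z).2 with _ | y
    · simp [insertTableau_cons, h₀]
    · simp_all [insertTableau_cons]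
  · simp at hT

theorem perm_flatten_insertTableau (T : List (List ℕ)) (z : ℕ) :
    (insertTableau T z).flatten ~ z :: T.flatten := by
  induction T generalizing z with
  | nil => simp [insertTableau_nil]
  | cons r rs ih =>
    have hr := perm_insertRow r z
    rcases h : (insertRow r z).2 with _ | y <;> simp only [h] at hr <;>
      simp only [insertTableau_cons, h, Option.elim, List.flatten_cons]
    · simpa using hr.append_right rs.flatten
    · calc (insertRow r z).1 ++ (insertTableau rs y).flatten
            ~ (insertRow r z).1 ++ [y] ++ rs.flatten := by simpa using (ih y).append_left _
          _ ~ z :: (r ++ rs.flatten) := by simpa using hr.append_right rs.flatten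

end InsertTableau

section RSP

theorem RSP_append_singleton (w : List ℕ) (z : ℕ) :
    RSP (w ++ [z]) = insertTableau (RSP w) z := by
  simp [RSP, List.foldl_append]

theorem perm_flatten_RSP (w : List ℕ) : (RSP w).flatten ~ w := by
  induction w using List.reverseRecOn with
  | nil => rfl
  | append_singleton w z ih =>
    rw [RSP_append_singleton]
    exact (perm_flatten_insertTableau _ z).trans
      ((ih.cons z).trans (List.perm_append_singleton z w).symm)

theorem mem_of_mem_RSP_getD {w : List ℕ} {i x : ℕ} (h : x ∈ (RSP w).getD i []) : x ∈ w := by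
  rw [List.getD_eq_getElem?_getD] at h
  rcases hi : (RSP w)[i]? with _ | r
  · simp [hi] at h
  · rw [hi, Option.getD_some] at h
    exact (perm_flatten_RSP w).subset (List.mem_flatten.mpr ⟨r, List.mem_of_getElem? hi, h⟩)

theorem pairwise_RSP_getD_zero (w : List ℕ) : ((RSP w).getD 0 []).Pairwise (· ≤ ·) := by
  induction w using List.reverseRecOn with
  | nil => simp [RSP]
  | append_singleton w z ih =>
    rw [RSP_append_singleton, insertTableau_getD_zero]
    exact pairwise_insertRow_fst ih

end RSP

def Contains321 (w : List ℕ) : Prop :=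
  ∃ a b c, [a, b, c] <+ w ∧ c < b ∧ b < a

def ForcesThirdRow (b : ℕ) (T : List (List ℕ)) : Prop :=
  3 ≤ T.length ∨ ∃ v ∈ T.getD 0 [], ∃ u ∈ T.getD 1 [], b ≤ v ∧ v < u

section ForcesThirdRow

variable {T : List (List ℕ)} {a b c : ℕ}

theorem forcesThirdRow_insertTableau (h : ForcesThirdRow b T) (z : ℕ) :
    ForcesThirdRow b (insertTableau T z) := by
  rcases h with h | ⟨v, hv, u, hu, hbv, hvu⟩
  · exact Or.inl (h.trans (length_le_length_insertTableau T z))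
  rcases h₀ : (insertRow (T.getD 0 []) z).2 with _ | y
  · refine Or.inr ⟨v, ?_, u, ?_, hbv, hvu⟩
    · rw [insertTableau_getD_zero]
      exact (mem_insertRow_fst_or_snd_eq hv).resolve_right (by rw [h₀]; simp)
    · rwa [insertTableau_getD_one_of_none h₀]
  rcases h₁ : (insertRow (T.getD 1 []) y).2 with _ | y'
  · refine Or.inr ⟨v, ?_, u, ?_, hbv, hvu⟩
    · rw [insertTableau_getD_zero]
      refine (mem_insertRow_fst_or_snd_eq hv).resolve_right fun hvy => ?_
      rw [h₀, Option.some_inj] at hvy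
      subst hvy
      exact ((insertRow_snd_eq_none_iff.mp h₁ u hu).not_gt hvu)
    · rw [insertTableau_getD_one_of_some h₀]
      exact (mem_insertRow_fst_or_snd_eq hu).resolve_right (by rw [h₁]; simp)
  · exact Or.inl (three_le_length_insertTableau h₀ h₁)

theorem forcesThirdRow_insertTableau_of_lt (ha : a ∈ T.flatten) (hba : b < a) :
    ForcesThirdRow b (insertTableau T b) := by
  by_cases h3 : 3 ≤ T.length
  · exact Or.inl (h3.trans (length_le_length_insertTableau T b))
  rcases h₀ : (insertRow (T.getD 0 []) b).2 with _ | y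
  · obtain ⟨a, ha, hba⟩ : ∃ a ∈ T.getD 1 [], b < a := by
      obtain ⟨r, hr, ha⟩ := List.mem_flatten.mp ha
      rcases List.eq_getD_zero_or_eq_getD_one (d := []) (by omega) hr with rfl | rfl
      · exact absurd (insertRow_snd_eq_none_iff.mp h₀ a ha) (not_le.mpr hba)
      · exact ⟨a, ha, hba⟩
    refine Or.inr ⟨b, ?_, a, ?_, le_rfl, hba⟩
    · rw [insertTableau_getD_zero]
      exact mem_insertRow_fst_self _ b
    · rwa [insertTableau_getD_one_of_none h₀]
  rcases h₁ : (insertRow (T.getD 1 []) y).2 with _ | y'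
  · refine Or.inr ⟨b, ?_, y, ?_, le_rfl, (lt_and_mem_of_insertRow_snd_eq_some h₀).1⟩
    · rw [insertTableau_getD_zero]
      exact mem_insertRow_fst_self _ b
    · rw [insertTableau_getD_one_of_some h₀]
      exact mem_insertRow_fst_self _ y
  · exact Or.inl (three_le_length_insertTableau h₀ h₁)

theorem ForcesThirdRow.three_le_length_insertTableau (h : ForcesThirdRow b T)
    (hs : (T.getD 0 []).Pairwise (· ≤ ·)) (hcb : c < b) : 3 ≤ (insertTableau T c).length := by
  rcases h with h | ⟨v, hv, u, hu, hbv, hvu⟩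
  · exact h.trans (length_le_length_insertTableau T c)
  obtain ⟨y, h₀⟩ := exists_insertRow_snd_eq_some hv (hcb.trans_le hbv)
  have hyv : y ≤ v := (isLeast_of_insertRow_snd_eq_some hs h₀).2 ⟨hv, hcb.trans_le hbv⟩
  obtain ⟨y', h₁⟩ := exists_insertRow_snd_eq_some hu (hyv.trans_lt hvu)
  exact _root_.three_le_length_insertTableau h₀ h₁

end ForcesThirdRow

theorem forcesThirdRow_RSP {w : List ℕ} {a b : ℕ} (h : [a, b] <+ w) (hba : b < a) :
    ForcesThirdRow b (RSP w) := by
  induction w using List.reverseRecOn with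
  | nil => simp at h
  | append_singleton w z ih =>
    rw [RSP_append_singleton]
    rcases List.sublist_append_singleton_iff.mp h with h | ⟨l, hl, ha⟩
    · exact forcesThirdRow_insertTableau (ih h) z
    · obtain ⟨rfl, h⟩ := List.append_inj' (s₁ := [a]) (t₁ := [b]) hl rfl
      obtain rfl : b = z := by simpa using h
      exact forcesThirdRow_insertTableau_of_lt
        ((perm_flatten_RSP w).symm.subset (List.singleton_sublist.mp ha)) hba

theorem three_le_length_RSP {w : List ℕ} (h : Contains321 w) : 3 ≤ (RSP w).length := by
  obtain ⟨a, b, c, h, hcb, hba⟩ := h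
  induction w using List.reverseRecOn with
  | nil => simp at h
  | append_singleton w z ih =>
    rw [RSP_append_singleton]
    rcases List.sublist_append_singleton_iff.mp h with h | ⟨l, hl, hab⟩
    · exact (ih h).trans (length_le_length_insertTableau _ z)
    · obtain ⟨rfl, h⟩ := List.append_inj' (s₁ := [a, b]) (t₁ := [c]) hl rfl
      obtain rfl : c = z := by simpa using h
      exact (forcesThirdRow_RSP hab hba).three_le_length_insertTableau
        (pairwise_RSP_getD_zero w) hcb

def SecondRowWitnessed (w : List ℕ) (T : List (List ℕ)) : Prop :=
  ∀ u ∈ T.getD 1 [], ∀ y ∈ T.getD 0 [], y < u → ∃ v, [u, v] <+ w ∧ y ≤ v ∧ v < u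

section SecondRowWitnessed

variable {w : List ℕ} {z y : ℕ}

theorem SecondRowWitnessed.insertRow_getD_one_snd_eq_none
    (hinv : SecondRowWitnessed w (RSP w)) (hw : ¬Contains321 (w ++ [z]))
    (h₀ : (insertRow ((RSP w).getD 0 []) z).2 = some y) :
    (insertRow ((RSP w).getD 1 []) y).2 = none := by
  obtain ⟨hzy, hy⟩ := lt_and_mem_of_insertRow_snd_eq_some h₀
  refine insertRow_snd_eq_none_iff.mpr fun u hu => not_lt.mp fun hyu => hw ?_
  obtain ⟨v, huv, hyv, hvu⟩ := hinv u hu y hy hyu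
  exact ⟨u, v, z, huv.append (.refl [z]), hzy.trans_le hyv, hvu⟩

theorem SecondRowWitnessed.append_singleton (hinv : SecondRowWitnessed w (RSP w)) :
    SecondRowWitnessed (w ++ [z]) (RSP (w ++ [z])) := by
  have witness_last : ∀ u ∈ w, [u, z] <+ w ++ [z] := fun u hu =>
    (List.singleton_sublist.mpr hu).append (.refl [z])
  intro u hu y hy hyu
  by_cases hyz : y = z
  · subst hyz
    have hu' : u ∈ w := by
      simpa [hyu.ne'] using mem_of_mem_RSP_getD hu
    exact ⟨y, witness_last u hu', le_rfl, hyu⟩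
  rw [RSP_append_singleton] at hu hy
  rw [insertTableau_getD_zero] at hy
  have hy := (eq_or_mem_of_mem_insertRow_fst hy).resolve_left hyz
  have of_old (hu : u ∈ (RSP w).getD 1 []) : ∃ v, [u, v] <+ w ++ [z] ∧ y ≤ v ∧ v < u := by
    obtain ⟨v, huv, hv⟩ := hinv u hu y hy hyu
    exact ⟨v, huv.trans (List.sublist_append_left w [z]), hv⟩
  rcases h₀ : (insertRow ((RSP w).getD 0 []) z).2 with _ | y₀
  · rw [insertTableau_getD_one_of_none h₀] at hu
    exact of_old hu
  rw [insertTableau_getD_one_of_some h₀] at hu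
  rcases eq_or_mem_of_mem_insertRow_fst hu with rfl | hu
  · have hleast := isLeast_of_insertRow_snd_eq_some (pairwise_RSP_getD_zero w) h₀
    have hyz : y ≤ z := not_lt.mp fun hzy => (hleast.2 ⟨hy, hzy⟩).not_gt hyu
    exact ⟨z, witness_last u (mem_of_mem_RSP_getD hleast.1.1), hyz, hleast.1.2⟩
  · exact of_old hu

end SecondRowWitnessed

theorem length_RSP_le_two_and_secondRowWitnessed {w : List ℕ} (hw : ¬Contains321 w) :
    (RSP w).length ≤ 2 ∧ SecondRowWitnessed w (RSP w) := by
  induction w using List.reverseRecOn with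
  | nil => simp [RSP, SecondRowWitnessed]
  | append_singleton w z ih =>
    obtain ⟨hlen, hinv⟩ := ih fun ⟨a, b, c, h, hcb⟩ =>
      hw ⟨a, b, c, h.trans (List.sublist_append_left w [z]), hcb⟩
    refine ⟨?_, hinv.append_singleton⟩
    rw [RSP_append_singleton]
    exact length_insertTableau_le_two hlen fun y h₀ => hinv.insertRow_getD_one_snd_eq_none hw h₀

theorem length_RSP_le_two_iff (w : List ℕ) : (RSP w).length ≤ 2 ↔ ¬Contains321 w :=
  ⟨fun h hw => by have := three_le_length_RSP hw; omega,
    fun hw => (length_RSP_le_two_and_secondRowWitnessed hw).1⟩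

theorem avoids321_iff_not_contains321 {n : ℕ} (π : Equiv.Perm (Fin n)) :
    Avoids321 π ↔ ¬Contains321 (List.ofFn fun i => (π i : ℕ) + 1) := by
  rw [Avoids321, Contains321]
  have hlt : ∀ i j : Fin n, (π i : ℕ) + 1 < (π j : ℕ) + 1 ↔ π i < π j := fun i j =>
    Nat.add_lt_add_iff_right.trans Fin.val_fin_lt
  simp only [List.cons_cons_cons_nil_sublist_ofFn_iff]
  constructor
  · rintro h ⟨_, _, _, ⟨i, j, k, hij, hjk, rfl, rfl, rfl⟩, hkj, hji⟩
    exact h i j k hij hjk ⟨(hlt k j).1 hkj, (hlt j i).1 hji⟩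
  · rintro h i j k hij hjk ⟨hkj, hji⟩
    exact h ⟨_, _, _, ⟨i, j, k, hij, hjk, rfl, rfl, rfl⟩, (hlt k j).2 hkj, (hlt j i).2 hji⟩

/-- A permutation is 321-avoiding iff its Robinson–Schensted insertion tableau
`P_π` has at most two rows. -/
theorem avoids321_iff_RSP_height_le_two {n : ℕ} (π : Equiv.Perm (Fin n)) :
    Avoids321 π ↔ (RSP (List.ofFn (fun i => ((π i : ℕ) + 1)))).length ≤ 2 :=
  (avoids321_iff_not_contains321 π).trans (length_RSP_le_two_iff _).symm
end
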